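/- There is an absolute constant c > 0 such that for every sufficiently large integer N, any coloring of {1, 2, …, N} with at most c·log log N colors contains a monochromatic 3-term arithmetic progression, i.e., three distinct integers x, x+d, x+2d (d > 0) of the same color. -/

import Mathlib

/-!
Colour focusing with a density increment. Suppose `χ` has no monochromatic 3-AP in `[1, N]`.
Keep a set `X ⊆ [1, n]` and points `s₀ < ⋯ < s_k` such that for all `x ∈ X` and `j < k` the
points `2sⱼ + x` and `sⱼ + s_k + x` both have colour `cⱼ`, the `cⱼ` being distinct. These are
the first two terms of a 3-AP whose third term is `2s_k + x`, so that point avoids every `cⱼ`.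
Shrink `X` to the `x` where this colour is a fixed `c_k` (losing a factor `r`), then to those
`x` with `x + δ` also kept, for a popular difference `δ`, and set `s_{k+1} = s_k + δ`. The density
of `X` goes from `α` to about `α² / 4r²`, so after `r` steps there are `r + 1` distinct colours,
which is absurd once `N ≥ 2 ^ 2 ^ (2r + 2)`, i.e. once `r ≤ (log log N) / 4`.
-/

open Finset

lemma Finset.exists_card_le_mul_card_fiber {α β : Type*} [DecidableEq β] {s : Finset α}
    {t : Finset β} {f : α → β} (hf : ∀ a ∈ s, f a ∈ t) (ht : t.Nonempty) :
    ∃ y ∈ t, #s ≤ #t * #{x ∈ s | f x = y} := by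
  have ht₀ : (0 : ℚ) < #t := by exact_mod_cast ht.card_pos
  obtain ⟨y, hy, h⟩ := exists_le_card_fiber_of_nsmul_le_card_of_maps_to hf ht
    (b := (#s : ℚ) / #t) (by rw [nsmul_eq_mul, mul_div_cancel₀ _ ht₀.ne'])
  exact ⟨y, hy, by exact_mod_cast (div_le_iff₀' ht₀).1 h⟩

lemma exists_popular_difference {C : Finset ℕ} {n : ℕ} (hC : ∀ x ∈ C, x ≤ n) (hC₂ : 2 ≤ #C) :
    ∃ δ, 0 < δ ∧ δ ≤ n ∧ #C ^ 2 ≤ 4 * n * #{x ∈ C | x + δ ∈ C} := by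
  have hmaps : ∀ p ∈ C.offDiag, max p.1 p.2 - min p.1 p.2 ∈ Icc 1 n := by
    intro p hp
    obtain ⟨h1, h2, hne⟩ := mem_offDiag.1 hp
    have := hC _ h1
    have := hC _ h2
    simp only [mem_Icc]
    omega
  obtain ⟨a, ha, b, hb, hab⟩ := one_lt_card.1 hC₂
  obtain ⟨δ, hδ, hfiber⟩ :=
    exists_card_le_mul_card_fiber hmaps ⟨_, hmaps (a, b) (mem_offDiag.2 ⟨ha, hb, hab⟩)⟩
  rw [mem_Icc] at hδ
  refine ⟨δ, hδ.1, hδ.2, ?_⟩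
  -- a pair at distance `δ` is determined by its smaller entry and by which entry it is
  have hinj : #{p ∈ C.offDiag | max p.1 p.2 - min p.1 p.2 = δ}
      ≤ #({x ∈ C | x + δ ∈ C} ×ˢ (univ : Finset Bool)) := by
    refine card_le_card_of_injOn (fun p => (min p.1 p.2, decide (p.1 < p.2))) ?_ ?_
    · intro p hp
      simp only [coe_filter, mem_offDiag, Set.mem_ofPred_eq] at hp
      simp only [coe_product, coe_filter, coe_univ, Set.mem_prod, Set.mem_ofPred_eq,
        Set.mem_univ, and_true]
      obtain ⟨⟨h1, h2, hne⟩, hd⟩ := hp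
      rcases lt_or_gt_of_ne hne with h | h
      · rw [min_eq_left h.le, show p.1 + δ = p.2 by omega]; exact ⟨h1, h2⟩
      · rw [min_eq_right h.le, show p.2 + δ = p.1 by omega]; exact ⟨h2, h1⟩
    · intro p hp q hq hpq
      simp only [coe_filter, mem_offDiag, Set.mem_ofPred_eq, Prod.mk.injEq,
        decide_eq_decide] at hp hq hpq
      ext <;> omega
  rw [Nat.card_Icc, Nat.add_sub_cancel, offDiag_card] at hfiber
  rw [card_product, card_univ, Fintype.card_bool] at hinj
  have : 2 * #C ≤ #C * #C := Nat.mul_le_mul_right _ hC₂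
  calc #C ^ 2 ≤ 2 * (n * #{p ∈ C.offDiag | max p.1 p.2 - min p.1 p.2 = δ}) := by
        rw [sq]; omega
    _ ≤ 2 * (n * (#{x ∈ C | x + δ ∈ C} * 2)) := by gcongr
    _ = 4 * n * #{x ∈ C | x + δ ∈ C} := by ring

lemma density_increment {M n r B X C D : ℕ} (hM : 4 * r ^ 2 ≤ M) (hX : M * n ≤ B * X)
    (hXC : X ≤ r * C) (hCD : C ^ 2 ≤ 4 * n * D) (hMn : 0 < M * n) : M * n ≤ B ^ 2 * D := by
  have hsq : (M * n) * (M * n) ≤ M * n * (B ^ 2 * D) :=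
    calc (M * n) * (M * n) ≤ (B * (r * C)) ^ 2 := by
          rw [← sq]; exact Nat.pow_le_pow_left (hX.trans (by gcongr)) 2
      _ = B ^ 2 * r ^ 2 * C ^ 2 := by ring
      _ ≤ B ^ 2 * r ^ 2 * (4 * n * D) := by gcongr
      _ = 4 * r ^ 2 * n * (B ^ 2 * D) := by ring
      _ ≤ M * n * (B ^ 2 * D) := by gcongr
  exact le_of_mul_le_mul_left hsq hMn

lemma Real.two_pow_le_of_natCast_le_log {y : ℝ} {m : ℕ} (hy : 0 < y) (h : (m : ℝ) ≤ Real.log y) :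
    (2 : ℝ) ^ m ≤ y :=
  calc (2 : ℝ) ^ m ≤ Real.exp 1 ^ m := by
        gcongr; linarith [Real.add_one_le_exp 1]
    _ = Real.exp m := Real.exp_one_pow m
    _ ≤ y := by rwa [← Real.le_log_iff_exp_le hy]

lemma two_pow_two_pow_le_of_natCast_le_log_log {N m : ℕ} (hm : 0 < m)
    (h : (m : ℝ) ≤ Real.log (Real.log N)) : 2 ^ 2 ^ m ≤ N := by
  have hlog : 0 < Real.log (Real.log N) := lt_of_lt_of_le (by exact_mod_cast hm) h
  have hlogN : 1 < Real.log N := (Real.log_pos_iff (Real.log_natCast_nonneg N)).1 hlog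
  have hN : (1 : ℝ) < N := (Real.log_pos_iff N.cast_nonneg).1 (by linarith)
  have h2m : ((2 ^ m : ℕ) : ℝ) ≤ Real.log N := by
    exact_mod_cast Real.two_pow_le_of_natCast_le_log (by linarith) h
  exact_mod_cast Real.two_pow_le_of_natCast_le_log (by linarith) h2m

def HasMonochromaticThreeAP {κ : Type*} (χ : ℕ → κ) (N : ℕ) : Prop :=
  ∃ x d : ℕ, 1 ≤ x ∧ 0 < d ∧ x + 2 * d ≤ N ∧ χ x = χ (x + d) ∧ χ x = χ (x + 2 * d)

structure Focusing {κ : Type*} (χ : ℕ → κ) (M n k : ℕ) where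
  s : ℕ → ℕ
  c : ℕ → κ
  X : Finset ℕ
  s_lt : ∀ j < k, s j < s k
  s_le : s k ≤ k * n
  X_subset : X ⊆ Icc 1 n
  card_X : M * n ≤ M ^ 2 ^ k * #X
  injOn_c : Set.InjOn c (Set.Iio k)
  color : ∀ x ∈ X, ∀ j < k, χ (2 * s j + x) = c j ∧ χ (s j + s k + x) = c j

namespace Focusing

variable {κ : Type*} {χ : ℕ → κ} {M n k N : ℕ}

def zero (χ : ℕ → κ) (M n : ℕ) : Focusing χ M n 0 where
  s _ := 0
  c _ := χ 0
  X := Icc 1 n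
  s_lt _ h := absurd h (Nat.not_lt_zero _)
  s_le := (zero_mul n).ge
  X_subset := subset_rfl
  card_X := by simp
  injOn_c _ h := absurd h (Nat.not_lt_zero _)
  color _ _ _ h := absurd h (Nat.not_lt_zero _)

lemma color_ne (F : Focusing χ M n k) (hχ : ¬HasMonochromaticThreeAP χ N)
    (hN : (2 * k + 1) * n ≤ N) {x : ℕ} (hx : x ∈ F.X) {j : ℕ} (hj : j < k) :
    χ (2 * F.s k + x) ≠ F.c j := by
  intro h
  have hx' := mem_Icc.1 (F.X_subset hx)
  have := F.s_lt j hj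
  have hN' : 2 * F.s k + x ≤ N := by nlinarith [F.s_le]
  obtain ⟨h₁, h₂⟩ := F.color x hx j hj
  refine hχ ⟨2 * F.s j + x, F.s k - F.s j, by omega, by omega, by omega, ?_, ?_⟩
  · rw [h₁, ← h₂]; congr 1; omega
  · rw [h₁, ← h]; congr 1; omega

lemma injOn_update (F : Focusing χ M n k) (hχ : ¬HasMonochromaticThreeAP χ N)
    (hN : (2 * k + 1) * n ≤ N) {x : ℕ} (hx : x ∈ F.X) :
    Set.InjOn (Function.update F.c k (χ (2 * F.s k + x))) (Set.Iio (k + 1)) := by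
  intro i hi j hj hij
  simp only [Set.mem_Iio] at hi hj
  rcases Nat.lt_succ_iff_lt_or_eq.1 hi with hi | rfl <;>
    rcases Nat.lt_succ_iff_lt_or_eq.1 hj with hj | rfl
  · simp only [Function.update_of_ne hi.ne, Function.update_of_ne hj.ne] at hij
    exact F.injOn_c hi hj hij
  · simp only [Function.update_of_ne hi.ne, Function.update_self] at hij
    exact absurd hij.symm (F.color_ne hχ hN hx hi)
  · simp only [Function.update_of_ne hj.ne, Function.update_self] at hij
    exact absurd hij (F.color_ne hχ hN hx hj)
  · rfl

lemma lt_card [Fintype κ] (F : Focusing χ M n k) (hχ : ¬HasMonochromaticThreeAP χ N)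
    (hN : (2 * k + 1) * n ≤ N) (hX : F.X.Nonempty) : k < Fintype.card κ := by
  obtain ⟨x, hx⟩ := hX
  have := card_le_card_of_injOn _ (fun _ _ => mem_univ _)
    (coe_range (k + 1) ▸ F.injOn_update hχ hN hx)
  rwa [card_range, card_univ, Nat.succ_le_iff] at this

lemma succ [Fintype κ] [DecidableEq κ] (F : Focusing χ M n k)
    (hχ : ¬HasMonochromaticThreeAP χ N) (hN : (2 * k + 1) * n ≤ N)
    (hM : 4 * Fintype.card κ ^ 2 ≤ M) (hn : Fintype.card κ * M ^ 2 ^ k < M * n) :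
    Nonempty (Focusing χ M n (k + 1)) := by
  obtain ⟨c₀, -, hXC⟩ := exists_card_le_mul_card_fiber (s := F.X)
    (f := fun x => χ (2 * F.s k + x)) (fun _ _ => mem_univ _) ⟨χ 0, mem_univ _⟩
  rw [card_univ] at hXC
  set r := Fintype.card κ
  set C := {x ∈ F.X | χ (2 * F.s k + x) = c₀}
  have hC : 2 ≤ #C := by
    by_contra! h
    have : M * n ≤ r * M ^ 2 ^ k :=
      calc M * n ≤ M ^ 2 ^ k * #F.X := F.card_X
        _ ≤ M ^ 2 ^ k * (r * #C) := by gcongr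
        _ ≤ M ^ 2 ^ k * (r * 1) := by gcongr; omega
        _ = r * M ^ 2 ^ k := by ring
    omega
  have hCX : C ⊆ F.X := filter_subset _ _
  obtain ⟨δ, hδ, hδn, hCD⟩ :=
    exists_popular_difference (fun x hx => (mem_Icc.1 (F.X_subset (hCX hx))).2) hC
  set D := {x ∈ C | x + δ ∈ C}
  have hDC : D ⊆ C := filter_subset _ _
  obtain ⟨x₀, hx₀⟩ : C.Nonempty := card_pos.1 (by omega)
  have hs : ∀ j < k + 1, Function.update F.s (k + 1) (F.s k + δ) j = F.s j :=
    fun j hj => Function.update_of_ne hj.ne _ _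
  refine ⟨{ s := Function.update F.s (k + 1) (F.s k + δ)
            c := Function.update F.c k c₀
            X := D
            s_lt := fun j hj => ?_
            s_le := ?_
            X_subset := hDC.trans (hCX.trans F.X_subset)
            card_X := by
              rw [pow_succ, pow_mul]; exact density_increment hM F.card_X hXC hCD (by omega)
            injOn_c := (mem_filter.1 hx₀).2 ▸ F.injOn_update hχ hN (hCX hx₀)
            color := fun x hx j hj => ?_ }⟩
  · rw [hs j hj, Function.update_self]
    rcases Nat.lt_succ_iff_lt_or_eq.1 hj with hj | rfl
    · exact (F.s_lt j hj).trans (by omega)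
    · omega
  · rw [Function.update_self, add_one_mul]
    exact add_le_add F.s_le hδn
  · obtain ⟨hxC, hxδC⟩ := mem_filter.1 hx
    rw [hs j hj, Function.update_self]
    rcases Nat.lt_succ_iff_lt_or_eq.1 hj with hj | rfl
    · rw [Function.update_of_ne hj.ne,
        show F.s j + (F.s k + δ) + x = F.s j + F.s k + (x + δ) by ring]
      exact ⟨(F.color x (hCX hxC) j hj).1, (F.color _ (hCX hxδC) j hj).2⟩
    · rw [Function.update_self, show F.s j + (F.s j + δ) + x = 2 * F.s j + (x + δ) by ring]
      exact ⟨(mem_filter.1 hxC).2, (mem_filter.1 hxδC).2⟩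

end Focusing

open Fintype in
theorem hasMonochromaticThreeAP_of_le {κ : Type*} [Fintype κ] [DecidableEq κ] (χ : ℕ → κ)
    {M n N : ℕ} (hM : 4 * card κ ^ 2 ≤ M) (hn : card κ * M ^ 2 ^ card κ < M * n)
    (hN : (2 * card κ + 1) * n ≤ N) : HasMonochromaticThreeAP χ N := by
  by_contra hχ
  have hMn : 0 < M * n := by omega
  have hF : ∀ k ≤ card κ, Nonempty (Focusing χ M n k) := by
    intro k hk
    induction k with
    | zero => exact ⟨Focusing.zero χ M n⟩
    | succ k ih =>
      obtain ⟨F⟩ := ih (by omega)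
      refine F.succ hχ (le_trans (by gcongr; omega) hN) hM (lt_of_le_of_lt ?_ hn)
      have := Nat.pos_of_mul_pos_right hMn
      gcongr <;> omega
  obtain ⟨F⟩ := hF (card κ) le_rfl
  have hX : F.X.Nonempty := card_pos.1 (Nat.pos_of_mul_pos_left (hMn.trans_le F.card_X))
  exact (F.lt_card hχ hN hX).false

open Fintype in
theorem hasMonochromaticThreeAP_of_two_pow_two_pow_le {κ : Type*} [Fintype κ] [DecidableEq κ]
    (χ : ℕ → κ) {N : ℕ} (hN : 2 ^ 2 ^ (2 * card κ + 2) ≤ N) : HasMonochromaticThreeAP χ N := by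
  set r := card κ
  have hr : r < 2 ^ r := Nat.lt_two_pow_self
  have hM : 2 ^ (2 * r + 2) = 4 * (2 ^ r) ^ 2 := by ring
  refine hasMonochromaticThreeAP_of_le χ (M := 2 ^ (2 * r + 2)) (n := (2 ^ (2 * r + 2)) ^ 2 ^ r)
    (by rw [hM]; gcongr) (by gcongr; nlinarith) (le_trans ?_ hN)
  calc (2 * r + 1) * (2 ^ (2 * r + 2)) ^ 2 ^ r ≤ 2 ^ (2 * r + 2) * (2 ^ (2 * r + 2)) ^ 2 ^ r := by
        gcongr; nlinarith
    _ = 2 ^ ((2 * r + 2) * (2 ^ r + 1)) := by rw [← pow_succ', ← pow_mul]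
    _ ≤ 2 ^ 2 ^ (2 * r + 2) := by
        gcongr
        · norm_num
        · rw [hM]; nlinarith

/-- There is an absolute constant `c > 0` such that for every sufficiently large
`N`, any coloring of `{1, …, N}` with at most `c * log log N` colors contains a
monochromatic 3-term arithmetic progression `x, x + d, x + 2d` with `d > 0`. -/
theorem monochromatic_arithmetic_progression :
    ∃ c : ℝ, 0 < c ∧ ∃ N₀ : ℕ, ∀ N : ℕ, N₀ ≤ N →
      ∀ r : ℕ, (r : ℝ) ≤ c * Real.log (Real.log N) →
        ∀ χ : ℕ → Fin r, ∃ x d : ℕ, 1 ≤ x ∧ 0 < d ∧ x + 2 * d ≤ N ∧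
          χ x = χ (x + d) ∧ χ x = χ (x + 2 * d) := by
  refine ⟨1 / 4, by norm_num, 0, fun N _ r hr χ => ?_⟩
  obtain rfl | hr₀ := Nat.eq_zero_or_pos r
  · exact (χ 0).elim0
  have hlog : ((2 * r + 2 : ℕ) : ℝ) ≤ Real.log (Real.log N) := by
    have : (1 : ℝ) ≤ r := by exact_mod_cast hr₀
    push_cast
    linarith
  have hN := two_pow_two_pow_le_of_natCast_le_log_log (by omega) hlog
  rw [← Fintype.card_fin r] at hN
  exact hasMonochromaticThreeAP_of_two_pow_two_pow_le χ hN
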